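/- arXiv:math-ph/0309054 — 2 statements merged into one kernel-verified Lean document; each statement's English description precedes it below -/
import Mathlib

section
/- Let Λ ⊆ ℝ be a Delaunay set with finite local complexity, enumerated as a strictly increasing sequence (λ_n)_{n∈ℤ}, let s ≥ 2, and for each n let B_n be the unique function in V_0^{(s)}(Λ) with support [λ_n, λ_{n+s}] and ∫ B_n = (λ_{n+s} − λ_n)/s (the B-spline of order s at λ_n). Then the set of translated shapes { x ↦ B_n(x + λ_n) : n ∈ ℤ } is a finite set of compactly supported functions. -/
/-!
Relative density bounds the gaps of `lam`, so the first `s` gaps after `lam n` all lie in the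
pattern of `Λ` of a fixed radius around `lam n`; finite local complexity leaves finitely many such
patterns, and the pattern determines the gaps. Two B-splines with the same gaps differ, after
translation, by a compactly supported `C^{s-2}` spline of degree `≤ s - 1` on `s` intervals with
zero integral. Its antiderivative is a compactly supported `C^{s-1}` spline of degree `≤ s` with
`s` pieces. The jumps `c i * (x - t i) ^ s` between its consecutive pieces at the `s + 1` knots
`t i` sum to zero, and powers `(x - t i) ^ s` at at most `s + 1` distinct points are linearly
independent (Vandermonde), so all jumps vanish and the difference is zero.
-/

open MeasureTheory Set Filter

noncomputable section

def UniformlyDiscrete (Λ : Set ℝ) : Prop :=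
  ∃ r > 0, ∀ x ∈ Λ, ∀ y ∈ Λ, x ≠ y → r ≤ |x - y|

def RelativelyDense (Λ : Set ℝ) : Prop :=
  ∃ R > 0, ∀ x : ℝ, ∃ y ∈ Λ, |x - y| ≤ R

def Delaunay (Λ : Set ℝ) : Prop := UniformlyDiscrete Λ ∧ RelativelyDense Λ

def FiniteLocalComplexity (Λ : Set ℝ) : Prop :=
  ∀ R > 0, {S : Set ℝ | ∃ l ∈ Λ, S = ((fun x => x - l) '' Λ) ∩ Set.Ioo (-R) R}.Finite

/-- The space `V_0^{(s)}(Λ)` of splines of order `s` with nodes at the points `lam n`: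
functions in `L²(ℝ)` of class `C^{s-2}` that restrict to a polynomial of degree `≤ s-1`
on each interval `[lam n, lam (n+1)]`. -/
def SplineSpace (lam : ℤ → ℝ) (s : ℕ) : Set (ℝ → ℝ) :=
  {f | MemLp f 2 volume ∧ ContDiff ℝ (s - 2 : ℕ) f ∧
    ∀ n : ℤ, ∃ p : Polynomial ℝ, p.degree ≤ (s - 1 : ℕ) ∧
      ∀ x ∈ Set.Icc (lam n) (lam (n + 1)), f x = p.eval x}

/-- The squared `L²` norm of a (square-integrable) function. -/
def l2sq (f : ℝ → ℝ) : ℝ := ∫ x : ℝ, (f x) ^ 2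

/-- `v` is a Riesz basis of the subspace `V` of `L²(ℝ)`: every `v i` lies in `V`,
there are frame constants `0 < A ≤ B` for all finite linear combinations,
and finite linear combinations of the `v i` are `L²`-dense in `V`. -/
def IsRieszBasisOf {ι : Type} (V : Set (ℝ → ℝ)) (v : ι → ℝ → ℝ) : Prop :=
  (∀ i, v i ∈ V) ∧
  (∃ A B : ℝ, 0 < A ∧ A ≤ B ∧
    ∀ (t : Finset ι) (a : ι → ℝ),
      A * ∑ i ∈ t, (a i) ^ 2 ≤ l2sq (fun x => ∑ i ∈ t, a i * v i x) ∧
      l2sq (fun x => ∑ i ∈ t, a i * v i x) ≤ B * ∑ i ∈ t, (a i) ^ 2) ∧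
  (∀ f ∈ V, ∀ ε > 0, ∃ (t : Finset ι) (a : ι → ℝ),
      l2sq (fun x => f x - ∑ i ∈ t, a i * v i x) < ε)

theorem finite_range_of_forall_eq_of_eq {α β γ : Type*} (f : α → β) (g : α → γ)
    (hg : (range g).Finite) (hfg : ∀ a b, g a = g b → f a = f b) : (range f).Finite := by
  have := hg.to_subtype
  refine (finite_range fun c : range g => f c.2.choose).subset ?_
  rintro _ ⟨a, rfl⟩
  exact ⟨⟨g a, mem_range_self a⟩, hfg _ _ (mem_range_self a).choose_spec⟩

open Polynomial

namespace Polynomial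

variable {K : Type*} [Field K] [CharZero K]

theorem exists_derivative_eq (p : K[X]) : ∃ P : K[X], derivative P = p := by
  induction p using Polynomial.induction_on' with
  | add p q hp hq =>
    obtain ⟨P, rfl⟩ := hp
    obtain ⟨Q, rfl⟩ := hq
    exact ⟨P + Q, derivative_add⟩
  | monomial n a =>
    refine ⟨monomial (n + 1) (a / (n + 1)), ?_⟩
    rw [derivative_monomial, Nat.add_sub_cancel]
    congr 1
    push_cast
    field_simp

theorem exists_eq_C_mul_X_sub_C_pow {d : K[X]} {k : ℕ} {x : K} (hdeg : d.natDegree ≤ k)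
    (hroot : ∀ j < k, (derivative^[j] d).IsRoot x) : ∃ c : K, d = C c * (X - C x) ^ k := by
  have hdvd : (X - C x) ^ k ∣ d := by
    rcases eq_or_ne d 0 with rfl | hd
    · exact dvd_zero _
    cases k with
    | zero => simp
    | succ n =>
      exact (pow_dvd_pow _ (lt_rootMultiplicity_of_isRoot_iterate_derivative hd
        fun m hm => hroot m (by omega))).trans (pow_rootMultiplicity_dvd d x)
  obtain ⟨q, rfl⟩ := hdvd
  rcases eq_or_ne q 0 with rfl | hq
  · exact ⟨0, by simp⟩
  rw [natDegree_mul (pow_ne_zero _ (X_sub_C_ne_zero x)) hq, natDegree_pow,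
    natDegree_X_sub_C] at hdeg
  exact ⟨q.coeff 0, by rw [mul_comm, ← eq_C_of_natDegree_le_zero (by omega)]⟩

/-- Comparing coefficients of `X ^ (d - j)` gives the transposed Vandermonde system
`∑ i, t i ^ j * c i = 0`. -/
theorem eq_zero_of_sum_C_mul_X_sub_C_pow_eq_zero {n d : ℕ} (hn : n ≤ d + 1) {t c : Fin n → K}
    (ht : Function.Injective t) (h : ∑ i, C (c i) * (X - C (t i)) ^ d = 0) : c = 0 := by
  refine Matrix.eq_zero_of_vecMul_eq_zero (Matrix.det_vandermonde_ne_zero_iff.mpr ht) ?_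
  ext j
  have hj : (j : ℕ) ≤ d := by omega
  have hcoeff := congrArg (coeff · (d - j)) h
  have hpow (i : Fin n) :
      ((X - C (t i)) ^ d).coeff (d - j) = (-1) ^ (j : ℕ) * d.choose j * t i ^ (j : ℕ) := by
    rw [sub_eq_add_neg, ← C_neg, coeff_X_add_C_pow, Nat.sub_sub_self hj, Nat.choose_symm hj,
      neg_pow]
    ring
  simp only [finsetSum_coeff, coeff_C_mul, coeff_zero, hpow] at hcoeff
  have hne : (-1 : K) ^ (j : ℕ) * (d.choose j : K) ≠ 0 := by
    simp [Nat.choose_eq_zero_iff, hj]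
  refine (mul_eq_zero.mp ?_).resolve_left hne
  simp only [Matrix.vecMul, dotProduct, Matrix.vandermonde_apply]
  rw [Finset.mul_sum, ← hcoeff]
  exact Finset.sum_congr rfl fun i _ => by ring

theorem eq_zero_of_forall_sub_eq_C_mul_X_sub_C_pow {G : ℕ → K[X]} {t : ℕ → K} {N d : ℕ}
    (hN : N ≤ d) (ht : Function.Injective t) (hG0 : G 0 = 0) (hGN : G (N + 1) = 0)
    (hjump : ∀ i ≤ N, ∃ c : K, G (i + 1) - G i = C c * (X - C (t i)) ^ d) :
    ∀ i ≤ N + 1, G i = 0 := by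
  choose! c hc using hjump
  have hsum : ∑ i : Fin (N + 1), C (c i) * (X - C (t i)) ^ d = 0 := by
    rw [← Finset.sum_range fun i => C (c i) * (X - C (t i)) ^ d,
      ← Finset.sum_congr rfl fun i hi => hc i (by simpa [Nat.lt_succ_iff] using hi),
      Finset.sum_range_sub G, hGN, hG0, sub_zero]
  have hc0 := eq_zero_of_sum_C_mul_X_sub_C_pow_eq_zero (by omega) (ht.comp Fin.val_injective) hsum
  intro i hi
  induction i with
  | zero => exact hG0
  | succ i ih =>
    have hci : c i = 0 := congrFun hc0 ⟨i, by omega⟩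
    have hstep : G (i + 1) - G i = 0 := by simp [hc i (by omega), hci]
    rw [sub_eq_zero.mp hstep, ih (by omega)]

end Polynomial

section Calculus

variable {𝕜 : Type*} [NontriviallyNormedField 𝕜]

theorem Polynomial.eqOn_iteratedDeriv {f : 𝕜 → 𝕜} {p : 𝕜[X]} {U : Set 𝕜} (hU : IsOpen U)
    (hfp : EqOn f (fun x => p.eval x) U) (j : ℕ) :
    EqOn (iteratedDeriv j f) (fun x => (derivative^[j] p).eval x) U := by
  induction j with
  | zero => simpa using hfp
  | succ j ih =>
    intro y hy
    rw [iteratedDeriv_succ, (ih.eventuallyEq_of_mem (hU.mem_nhds hy)).deriv_eq, Polynomial.deriv,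
      Function.iterate_succ_apply']

theorem Polynomial.iteratedDeriv_eq_of_mem_closure {f : 𝕜 → 𝕜} {k : ℕ} (hf : ContDiff 𝕜 k f)
    {p : 𝕜[X]} {U : Set 𝕜} (hU : IsOpen U) (hfp : EqOn f (fun x => p.eval x) U) {x : 𝕜}
    (hx : x ∈ closure U) {j : ℕ} (hj : j ≤ k) :
    iteratedDeriv j f x = (derivative^[j] p).eval x :=
  (eqOn_iteratedDeriv hU hfp j).closure (hf.continuous_iteratedDeriv j (by exact_mod_cast hj))
    (Polynomial.continuous _) hx

end Calculus

theorem exists_sub_eq_C_mul_X_sub_C_pow {f : ℝ → ℝ} {k : ℕ} (hf : ContDiff ℝ k f)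
    {p q : ℝ[X]} (hp : p.natDegree ≤ k + 1) (hq : q.natDegree ≤ k + 1) {U V : Set ℝ}
    (hU : IsOpen U) (hV : IsOpen V) (hfp : EqOn f (fun x => p.eval x) U)
    (hfq : EqOn f (fun x => q.eval x) V) {x : ℝ} (hxU : x ∈ closure U) (hxV : x ∈ closure V) :
    ∃ c : ℝ, q - p = C c * (X - C x) ^ (k + 1) := by
  refine exists_eq_C_mul_X_sub_C_pow ((natDegree_sub_le_of_le hq hp).trans_eq (max_self _))
    fun j hj => ?_
  rw [IsRoot, iterate_derivative_sub, eval_sub,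
    ← iteratedDeriv_eq_of_mem_closure hf hV hfq hxV (by omega),
    ← iteratedDeriv_eq_of_mem_closure hf hU hfp hxU (by omega), sub_self]

def IsPiecewisePoly (f : ℝ → ℝ) (t : ℕ → ℝ) (N d : ℕ) : Prop :=
  ∀ i < N, ∃ p : ℝ[X], p.natDegree ≤ d ∧ EqOn f (fun x => p.eval x) (Icc (t i) (t (i + 1)))

theorem IsPiecewisePoly.sub {f g : ℝ → ℝ} {t : ℕ → ℝ} {N d : ℕ} (hf : IsPiecewisePoly f t N d)
    (hg : IsPiecewisePoly g t N d) : IsPiecewisePoly (fun x => f x - g x) t N d := by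
  intro i hi
  obtain ⟨p, hpd, hp⟩ := hf i hi
  obtain ⟨q, hqd, hq⟩ := hg i hi
  exact ⟨p - q, (natDegree_sub_le_of_le hpd hqd).trans_eq (max_self _),
    fun x hx => by simp [hp hx, hq hx]⟩

theorem IsPiecewisePoly.intervalIntegral {h : ℝ → ℝ} {t : ℕ → ℝ} {N d : ℕ} (hh : Continuous h)
    (hpw : IsPiecewisePoly h t N d) (a : ℝ) :
    IsPiecewisePoly (fun x => ∫ u in a..x, h u) t N (d + 1) := by
  intro i hi
  obtain ⟨p, hpd, hp⟩ := hpw i hi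
  obtain ⟨P, rfl⟩ := exists_derivative_eq p
  refine ⟨P + C ((∫ u in a..t i, h u) - P.eval (t i)), ?_, fun x hx => ?_⟩
  · rw [natDegree_add_C]
    have := natDegree_derivative P
    omega
  have hsub : uIcc (t i) x ⊆ Icc (t i) (t (i + 1)) := by
    rw [uIcc_of_le hx.1]
    exact Icc_subset_Icc le_rfl hx.2
  have hFTC : ∫ u in t i..x, h u = P.eval x - P.eval (t i) := by
    rw [intervalIntegral.integral_congr fun y hy => hp (hsub hy)]
    exact intervalIntegral.integral_eq_sub_of_hasDerivAt (fun y _ => P.hasDerivAt y)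
      ((Polynomial.continuous _).intervalIntegrable _ _)
  simp only [eval_add, eval_C]
  rw [← intervalIntegral.integral_add_adjacent_intervals (hh.intervalIntegrable a (t i))
    (hh.intervalIntegrable (t i) x), hFTC]
  ring

theorem eq_zero_of_isPiecewisePoly_of_contDiff {H : ℝ → ℝ} {t : ℕ → ℝ} {N k : ℕ}
    (ht : StrictMono t) (hN : N ≤ k + 1) (hH : ContDiff ℝ k H)
    (hpw : IsPiecewisePoly H t N (k + 1)) (hout : ∀ x ∉ Ioo (t 0) (t N), H x = 0) : H = 0 := by
  choose! p hpdeg hp using hpw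
  -- `G i` is the piece of `H` left of the knot `t i`, and `0` outside `[t 0, t N]`
  set G : ℕ → ℝ[X] := fun i => if 0 < i ∧ i ≤ N then p (i - 1) else 0 with hG
  have hGdeg : ∀ i, (G i).natDegree ≤ k + 1 := by
    intro i
    simp only [hG]
    split_ifs
    · exact hpdeg _ (by omega)
    · simp
  have hpiece : ∀ i ≤ N + 1, ∃ U : Set ℝ, IsOpen U ∧ EqOn H (fun x => (G i).eval x) U ∧
      (i ≤ N → t i ∈ closure U) ∧ (0 < i → t (i - 1) ∈ closure U) := by
    intro i hi
    rcases Nat.eq_zero_or_pos i with rfl | hi0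
    · refine ⟨Iio (t 0), isOpen_Iio, fun x hx => ?_, fun _ => by simp, by simp⟩
      simpa [hG] using hout x fun h => (lt_asymm h.1 hx).elim
    rcases hi.lt_or_eq with hiN | rfl
    · have hlt : t (i - 1) < t i := ht (by omega)
      refine ⟨Ioo (t (i - 1)) (t i), isOpen_Ioo, fun x hx => ?_, fun _ => ?_, fun _ => ?_⟩
      · have := hp (i - 1) (by omega) ⟨hx.1.le, by rw [Nat.sub_add_cancel hi0]; exact hx.2.le⟩
        simpa [hG, hi0, show i ≤ N by omega] using this
      · rw [closure_Ioo hlt.ne]; exact ⟨hlt.le, le_rfl⟩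
      · rw [closure_Ioo hlt.ne]; exact ⟨le_rfl, hlt.le⟩
    · refine ⟨Ioi (t N), isOpen_Ioi, fun x hx => ?_, fun h => by omega, fun _ => by simp⟩
      simpa [hG] using hout x fun h => (lt_asymm h.2 hx).elim
  have hjump : ∀ i ≤ N, ∃ c : ℝ, G (i + 1) - G i = C c * (X - C (t i)) ^ (k + 1) := by
    intro i hi
    obtain ⟨U, hU, hHU, hxU, -⟩ := hpiece i (by omega)
    obtain ⟨V, hV, hHV, -, hxV⟩ := hpiece (i + 1) (by omega)
    exact exists_sub_eq_C_mul_X_sub_C_pow hH (hGdeg i) (hGdeg (i + 1)) hU hV hHU hHV (hxU hi)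
      (hxV i.succ_pos)
  have hG0 := eq_zero_of_forall_sub_eq_C_mul_X_sub_C_pow hN ht.injective (by simp [hG])
    (by simp [hG]) hjump
  funext x
  by_cases hx : x ∈ Ico (t 0) (t N)
  · obtain ⟨i, hi, hxi⟩ := mem_iUnion₂.mp (Ico_subset_biUnion_Ico N t hx)
    have hi : i < N := Finset.mem_range.mp hi
    rw [hp i hi (Ico_subset_Icc_self hxi)]
    have hpi : p i = 0 := by simpa [hG, hi] using hG0 (i + 1) (by omega)
    simp [hpi]
  · exact hout x fun h => hx ⟨h.1.le, h.2⟩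

theorem eq_zero_of_isPiecewisePoly_of_integral_eq_zero {h : ℝ → ℝ} {t : ℕ → ℝ} {N k : ℕ}
    (ht : StrictMono t) (hN : N ≤ k + 2) (hh : ContDiff ℝ k h)
    (hpw : IsPiecewisePoly h t N (k + 1)) (hout : ∀ x ∉ Icc (t 0) (t N), h x = 0)
    (hint : ∫ x, h x = 0) : h = 0 := by
  have hcont : Continuous h := hh.continuous
  have hout' : ∀ x ∉ Ioo (t 0) (t N), h x = 0 := by
    have := (show EqOn h 0 (Icc (t 0) (t N))ᶜ from hout).closure hcont continuous_const
    rwa [closure_compl, interior_Icc] at this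
  set H : ℝ → ℝ := fun x => ∫ u in t 0..x, h u
  have hHd : ∀ x, HasDerivAt H (h x) x := fun x =>
    (hcont.integral_hasStrictDerivAt (t 0) x).hasDerivAt
  have hHsmooth : ContDiff ℝ (k + 1 : ℕ) H := by
    rw [Nat.cast_succ, contDiff_succ_iff_deriv]
    refine ⟨fun x => (hHd x).differentiableAt, by simp, ?_⟩
    rwa [show deriv H = h from funext fun x => (hHd x).deriv]
  have hHout : ∀ x ∉ Ioo (t 0) (t N), H x = 0 := by
    intro x hx
    rcases le_or_gt x (t 0) with hx0 | hx0
    · have : EqOn h 0 (uIcc (t 0) x) := fun y hy =>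
        hout' y fun h' => (uIcc_of_ge hx0 ▸ hy).2.not_gt h'.1
      simp [H, intervalIntegral.integral_congr this]
    · have hxN : t N ≤ x := by by_contra! h'; exact hx ⟨hx0, h'⟩
      rw [← hint]
      refine intervalIntegral.integral_eq_integral_of_support_subset fun y hy => ?_
      by_contra h'
      exact hy (hout' y fun h'' => h' ⟨h''.1, h''.2.le.trans hxN⟩)
  have hH0 := eq_zero_of_isPiecewisePoly_of_contDiff ht hN hHsmooth
    (hpw.intervalIntegral hcont (t 0)) hHout
  funext x
  rw [← (hHd x).deriv, hH0]
  simp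

section Delaunay

variable {lam : ℤ → ℝ}

theorem sub_le_of_forall_exists_abs_sub_le (hmono : StrictMono lam) {R : ℝ}
    (hR : ∀ x : ℝ, ∃ y ∈ range lam, |x - y| ≤ R) (n : ℤ) (i : ℕ) :
    lam (n + i) - lam n ≤ 2 * R * i := by
  have hgap : ∀ k, lam (k + 1) - lam k ≤ 2 * R := by
    intro k
    by_contra! hk
    obtain ⟨_, ⟨j, rfl⟩, hj⟩ := hR ((lam k + lam (k + 1)) / 2)
    rw [abs_le] at hj
    have h1 : k < j := hmono.lt_iff_lt.mp (by linarith)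
    have h2 : j < k + 1 := hmono.lt_iff_lt.mp (by linarith)
    omega
  induction i with
  | zero => simp
  | succ i ih =>
    have := hgap (n + i)
    push_cast at ih ⊢
    rw [← add_assoc]
    linarith

def localPattern (Λ : Set ℝ) (ρ x : ℝ) : Set ℝ := ((fun y => y - x) '' Λ) ∩ Ioo (-ρ) ρ

variable {ρ : ℝ} {s : ℕ} {n m : ℤ}

theorem sub_mem_localPattern (hmono : StrictMono lam) (hn : lam (n + s) - lam n < ρ) {i : ℕ}
    (hi : i ≤ s) : lam (n + i) - lam n ∈ localPattern (range lam) ρ (lam n) := by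
  have h0 : lam n ≤ lam (n + i) := hmono.monotone (by omega)
  have hs : lam (n + i) ≤ lam (n + s) := hmono.monotone (by omega)
  exact ⟨⟨lam (n + i), mem_range_self _, rfl⟩, by linarith, by linarith⟩

/-- The `(i + 1)`-st gap after `lam n` is the first point of the pattern beyond the `i`-th. -/
theorem sub_le_of_localPattern_eq (hmono : StrictMono lam) (hn : lam (n + s) - lam n < ρ)
    (hpat : localPattern (range lam) ρ (lam n) = localPattern (range lam) ρ (lam m)) {i : ℕ}
    (hi : i + 1 ≤ s) (heq : lam (n + i) - lam n = lam (m + i) - lam m) :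
    lam (m + (i + 1 : ℕ)) - lam m ≤ lam (n + (i + 1 : ℕ)) - lam n := by
  obtain ⟨⟨_, ⟨j, rfl⟩, hj⟩, -⟩ := hpat ▸ sub_mem_localPattern hmono hn hi
  simp only at hj
  have hstep : lam (n + i) < lam (n + (i + 1 : ℕ)) := hmono (by omega)
  have hmj : m + i < j := hmono.lt_iff_lt.mp (by linarith)
  have := hmono.monotone (show m + (i + 1 : ℕ) ≤ j by omega)
  linarith

theorem sub_eq_of_localPattern_eq (hmono : StrictMono lam) (hn : lam (n + s) - lam n < ρ)
    (hm : lam (m + s) - lam m < ρ)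
    (hpat : localPattern (range lam) ρ (lam n) = localPattern (range lam) ρ (lam m)) :
    ∀ i ≤ s, lam (n + i) - lam n = lam (m + i) - lam m := by
  intro i hi
  induction i with
  | zero => simp
  | succ i ih =>
    have ih := ih (by omega)
    exact le_antisymm (sub_le_of_localPattern_eq hmono hm hpat.symm hi ih.symm)
      (sub_le_of_localPattern_eq hmono hn hpat hi ih)

theorem finite_range_localPattern (hflc : FiniteLocalComplexity (range lam)) (hρ : 0 < ρ) :
    (range fun n => localPattern (range lam) ρ (lam n)).Finite :=
  (hflc ρ hρ).subset <| by
    rintro _ ⟨n, rfl⟩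
    exact ⟨lam n, mem_range_self n, rfl⟩

end Delaunay

theorem isPiecewisePoly_comp_add_of_mem_splineSpace {lam : ℤ → ℝ} {s : ℕ} {f : ℝ → ℝ}
    (hf : f ∈ SplineSpace lam s) {t : ℕ → ℝ} {c : ℝ} {n : ℤ} {N : ℕ}
    (ht : ∀ i ≤ N, t i + c = lam (n + i)) : IsPiecewisePoly (fun x => f (x + c)) t N (s - 1) := by
  intro i hi
  obtain ⟨p, hpdeg, hp⟩ := hf.2.2 (n + i)
  refine ⟨p.comp (X + C c), ?_, fun x hx => ?_⟩
  · rw [natDegree_comp, natDegree_X_add_C, mul_one]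
    exact natDegree_le_iff_degree_le.mpr hpdeg
  · have h0 := ht i (by omega)
    have h1 := ht (i + 1) hi
    push_cast at h1
    rw [← add_assoc] at h1
    simp only [eval_comp, eval_add, eval_X, eval_C]
    exact hp (x := x + c) ⟨by linarith [hx.1], by linarith [hx.2]⟩

def IsBSpline (lam : ℤ → ℝ) (s : ℕ) (n : ℤ) (f : ℝ → ℝ) : Prop :=
  f ∈ SplineSpace lam s ∧ tsupport f = Icc (lam n) (lam (n + s)) ∧
    ∫ x, f x = (lam (n + s) - lam n) / s

namespace IsBSpline

variable {lam : ℤ → ℝ} {s : ℕ} {n : ℤ} {f : ℝ → ℝ}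

theorem hasCompactSupport (hf : IsBSpline lam s n f) : HasCompactSupport f := by
  rw [HasCompactSupport, hf.2.1]
  exact isCompact_Icc

theorem integrable (hf : IsBSpline lam s n f) : Integrable f :=
  hf.1.2.1.continuous.integrable_of_hasCompactSupport hf.hasCompactSupport

theorem comp_add_eq_zero (hf : IsBSpline lam s n f) {x : ℝ}
    (hx : x ∉ Icc 0 (lam (n + s) - lam n)) : f (x + lam n) = 0 :=
  image_eq_zero_of_notMem_tsupport <| by
    rw [hf.2.1]
    exact fun h => hx ⟨by linarith [h.1], by linarith [h.2]⟩

theorem comp_add_eq_of_sub_eq (hs : 2 ≤ s) (hmono : StrictMono lam) {m : ℤ} {g : ℝ → ℝ}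
    (hf : IsBSpline lam s n f) (hg : IsBSpline lam s m g)
    (hgap : ∀ i ≤ s, lam (n + i) - lam n = lam (m + i) - lam m) :
    (fun x => f (x + lam n)) = fun x => g (x + lam m) := by
  obtain ⟨k, rfl⟩ : ∃ k, s = k + 2 := ⟨s - 2, by omega⟩
  set t : ℕ → ℝ := fun i => lam (n + i) - lam n
  have ht : StrictMono t := fun i j hij => by
    simpa [t] using hmono (show n + i < n + j by omega)
  have hsmooth : ContDiff ℝ k fun x => f (x + lam n) - g (x + lam m) := by
    have hf' : ContDiff ℝ k f := by simpa using hf.1.2.1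
    have hg' : ContDiff ℝ k g := by simpa using hg.1.2.1
    exact (hf'.comp (contDiff_id.add contDiff_const)).sub
      (hg'.comp (contDiff_id.add contDiff_const))
  have hpw : IsPiecewisePoly (fun x => f (x + lam n) - g (x + lam m)) t (k + 2) (k + 1) :=
    (isPiecewisePoly_comp_add_of_mem_splineSpace (n := n) hf.1 fun i _ => by simp [t]).sub
      (isPiecewisePoly_comp_add_of_mem_splineSpace (n := m) hg.1 fun i hi => by simp [t, hgap i hi])
  have hout : ∀ x ∉ Icc (t 0) (t (k + 2)), f (x + lam n) - g (x + lam m) = 0 := by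
    intro x hx
    simp only [t, Nat.cast_zero, add_zero, sub_self] at hx
    rw [hf.comp_add_eq_zero hx, hg.comp_add_eq_zero (by rwa [← hgap _ le_rfl]), sub_self]
  have hint : ∫ x, f (x + lam n) - g (x + lam m) = 0 := by
    rw [integral_sub (hf.integrable.comp_add_right _) (hg.integrable.comp_add_right _),
      integral_add_right_eq_self, integral_add_right_eq_self, hf.2.2, hg.2.2, hgap _ le_rfl,
      sub_self]
  funext x
  exact sub_eq_zero.mp
    (congrFun (eq_zero_of_isPiecewisePoly_of_integral_eq_zero ht le_rfl hsmooth hpw hout hint) x)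

end IsBSpline

/-- on a Delaunay set of finite local complexity, the translated shapes
`x ↦ B_n (x + lam n)` of the order-`s` B-splines form a finite set of compactly
supported functions. -/
theorem statement1 (Λ : Set ℝ) (lam : ℤ → ℝ) (s : ℕ) (B : ℤ → ℝ → ℝ)
    (hΛ : Delaunay Λ) (hflc : FiniteLocalComplexity Λ)
    (hmono : StrictMono lam) (hrange : Set.range lam = Λ) (hs : 2 ≤ s)
    (hB : ∀ n : ℤ, B n ∈ SplineSpace lam s ∧
      tsupport (B n) = Set.Icc (lam n) (lam (n + (s : ℤ))) ∧
      (∫ x : ℝ, B n x) = (lam (n + (s : ℤ)) - lam n) / (s : ℝ)) :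
    (Set.range fun n : ℤ => fun x : ℝ => B n (x + lam n)).Finite ∧
      ∀ n : ℤ, HasCompactSupport fun x : ℝ => B n (x + lam n) := by
  subst hrange
  have hB : ∀ n, IsBSpline lam s n (B n) := hB
  obtain ⟨-, R, hR, hdense⟩ := hΛ
  set ρ : ℝ := 2 * R * s + 1
  have hρ : ∀ n, lam (n + s) - lam n < ρ := fun n => by
    linarith [sub_le_of_forall_exists_abs_sub_le hmono hdense n s]
  have hshape : ∀ n m, localPattern (range lam) ρ (lam n) = localPattern (range lam) ρ (lam m) →
      (fun x => B n (x + lam n)) = fun x => B m (x + lam m) := fun n m hnm =>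
    (hB n).comp_add_eq_of_sub_eq hs hmono (hB m) (sub_eq_of_localPattern_eq hmono (hρ n) (hρ m) hnm)
  exact ⟨finite_range_of_forall_eq_of_eq _ _
    (finite_range_localPattern hflc (by positivity)) hshape,
    fun n => (hB n).hasCompactSupport.comp_homeomorph (Homeomorph.addRight (lam n))⟩
end
end

section
/- Let a ≥ 3 be an integer and β = (a + √(a² − 4))/2, so that β² = aβ − 1. Then for every x ∈ ℝ: (i) 𝟙_{[0,1)}(x) = Σ_{l=0}^{a−2} 𝟙_{[0,1)}(βx − l) + 𝟙_{[0,1−1/β)}(βx − (a−1)); (ii) 𝟙_{[0,1−1/β)}(x) = Σ_{l=0}^{a−3} 𝟙_{[0,1)}(βx − l) + 𝟙_{[0,1−1/β)}(βx − (a−2)). These are the Haar refinement (scaling) equations for the scaling functions on the β-integer tiling with tiles of lengths 1 (L) and 1 − 1/β (S). -/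
/-! Multiplication by `β` maps a tile `[0, d)` onto `[0, β d)`, which is cut into unit tiles
`[l, l + 1)` followed by a remainder. For `d = 1` there are `a - 1` unit tiles and, since
`1 / β = a - β`, the remainder `β - (a - 1)` is `1 - 1 / β`; for `d = 1 - 1 / β` the image
`[0, β - 1)` holds `a - 2` unit tiles and the same remainder. -/

open Set

section IcoIndicator

variable {𝕜 M : Type*} [Field 𝕜] [LinearOrder 𝕜] [IsStrictOrderedRing 𝕜] [AddCommMonoid M]
  (m : M)

theorem indicator_Ico_eq_add_indicator_Ico_sub_one {c : 𝕜} (hc : 1 ≤ c) (t : 𝕜) :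
    (Ico 0 c).indicator (fun _ => m) t =
      (Ico 0 1).indicator (fun _ => m) t + (Ico 0 (c - 1)).indicator (fun _ => m) (t - 1) := by
  simp only [indicator_apply, mem_Ico, sub_nonneg, sub_lt_sub_iff_right]
  split_ifs <;> grind

theorem indicator_Ico_eq_sum_add (n : ℕ) {c : 𝕜} (hc : n ≤ c) (t : 𝕜) :
    (Ico 0 c).indicator (fun _ => m) t =
      ∑ l ∈ Finset.range n, (Ico 0 1).indicator (fun _ => m) (t - l) +
        (Ico 0 (c - n)).indicator (fun _ => m) (t - n) := by
  induction n with
  | zero => simp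
  | succ n ih =>
    have hcn : 1 ≤ c - n := by push_cast at hc; linarith
    rw [ih (le_trans (by simp) hc), indicator_Ico_eq_add_indicator_Ico_sub_one m hcn,
      Finset.sum_range_succ, add_assoc]
    push_cast
    simp only [sub_sub]

theorem indicator_Ico_mul {β : 𝕜} (hβ : 0 < β) (d x : 𝕜) :
    (Ico 0 d).indicator (fun _ => m) x = (Ico 0 (β * d)).indicator (fun _ => m) (β * x) := by
  simp only [indicator_apply, mem_Ico, mul_nonneg_iff_of_pos_left hβ, mul_lt_mul_iff_right₀ hβ]

theorem indicator_Ico_eq_sum_indicator_mul_sub {β : 𝕜} (hβ : 0 < β) (n : ℕ) {d : 𝕜}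
    (hn : n ≤ β * d) (x : 𝕜) :
    (Ico 0 d).indicator (fun _ => m) x =
      ∑ l ∈ Finset.range n, (Ico 0 1).indicator (fun _ => m) (β * x - l) +
        (Ico 0 (β * d - n)).indicator (fun _ => m) (β * x - n) := by
  rw [indicator_Ico_mul m hβ, indicator_Ico_eq_sum_add m n hn]

end IcoIndicator

theorem add_sqrt_sq_sub_four_div_two_sq {a : ℝ} (ha : 2 ≤ a) :
    ((a + √(a ^ 2 - 4)) / 2) ^ 2 = a * ((a + √(a ^ 2 - 4)) / 2) - 1 := by
  have hsq : √(a ^ 2 - 4) ^ 2 = a ^ 2 - 4 := Real.sq_sqrt (by nlinarith)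
  linear_combination hsq / 4

theorem one_div_eq_sub_of_sq_eq {a β : ℝ} (hβ : β ≠ 0) (hq : β ^ 2 = a * β - 1) :
    1 / β = a - β := by
  rw [div_eq_iff hβ]
  linear_combination hq

/-- Haar refinement equations for the β-integer tiling, case
`β² = aβ - 1`, `a ≥ 3`, with tiles of lengths `1` (L) and `1 - 1/β` (S). -/
theorem statement18 (a : ℕ) (ha : 3 ≤ a) (β : ℝ)
    (hβ : β = ((a : ℝ) + Real.sqrt ((a : ℝ) ^ 2 - 4)) / 2) :
    (∀ x : ℝ,
      Set.indicator (Set.Ico (0 : ℝ) 1) (fun _ => (1 : ℝ)) x =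
        (∑ l ∈ Finset.range (a - 1),
          Set.indicator (Set.Ico (0 : ℝ) 1) (fun _ => (1 : ℝ)) (β * x - (l : ℝ))) +
        Set.indicator (Set.Ico (0 : ℝ) (1 - 1 / β)) (fun _ => (1 : ℝ))
          (β * x - ((a : ℝ) - 1))) ∧
    (∀ x : ℝ,
      Set.indicator (Set.Ico (0 : ℝ) (1 - 1 / β)) (fun _ => (1 : ℝ)) x =
        (∑ l ∈ Finset.range (a - 2),
          Set.indicator (Set.Ico (0 : ℝ) 1) (fun _ => (1 : ℝ)) (β * x - (l : ℝ))) +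
        Set.indicator (Set.Ico (0 : ℝ) (1 - 1 / β)) (fun _ => (1 : ℝ))
          (β * x - ((a : ℝ) - 2))) := by
  have ha3 : (3 : ℝ) ≤ a := by exact_mod_cast ha
  have hβ1 : 1 ≤ β := by rw [hβ]; linarith [Real.sqrt_nonneg ((a : ℝ) ^ 2 - 4)]
  have hβ0 : 0 < β := by linarith
  have hinv : 1 / β = a - β :=
    one_div_eq_sub_of_sq_eq hβ0.ne' (hβ ▸ add_sqrt_sq_sub_four_div_two_sq (by linarith))
  have hinv_le : 1 / β ≤ 1 := (div_le_one hβ0).2 hβ1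
  have hcast1 : ((a - 1 : ℕ) : ℝ) = a - 1 := by rw [Nat.cast_sub (by omega)]; simp
  have hcast2 : ((a - 2 : ℕ) : ℝ) = a - 2 := by rw [Nat.cast_sub (by omega)]; simp
  have hS : β * (1 - 1 / β) = β - 1 := by rw [mul_sub, mul_one_div_cancel hβ0.ne', mul_one]
  constructor
  · intro x
    rw [indicator_Ico_eq_sum_indicator_mul_sub 1 hβ0 (a - 1) (by rw [hcast1]; linarith), hcast1]
    congr 3
    linarith
  · intro x
    rw [indicator_Ico_eq_sum_indicator_mul_sub 1 hβ0 (a - 2) (by rw [hcast2, hS]; linarith),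
      hcast2, hS]
    congr 3
    linarith
end
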